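/- arXiv:2605.21400 — 3 statements merged into one kernel-verified Lean document; each statement's English description precedes it below -/
import Mathlib

section
/- Let i, D be nonnegative integers, A a positive integer, and k₀ an integer with Δ₀ = k₀·A − i·D < 0. Set q = ⌊|Δ₀|/A⌋, k₁ = k₀ + q, and Δ₁ = −(|Δ₀| mod A). Then Δ₁ = k₁·A − i·D, and: if |Δ₁ + A| < |Δ₁| then k₁ + 1 minimizes |k·A − i·D| over all integers k; otherwise k₁ minimizes |k·A − i·D| over all integers k. -/
/-! Euclidean division of `|Δ₀| = i D - k₀ A` by `A` gives `k₁ A ≤ i D < (k₁ + 1) A`, and the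
multiple of `A` nearest to `i D` is one of the two multiples bracketing it. -/

theorem min_abs_le_abs_mul_sub {A x k₁ : ℤ} (hlow : k₁ * A ≤ x) (hhigh : x < (k₁ + 1) * A)
    (k : ℤ) : min |(k₁ + 1) * A - x| |k₁ * A - x| ≤ |k * A - x| := by
  have hA : 0 < A := by linarith
  rcases le_or_gt k k₁ with hk | hk
  · have : k * A ≤ k₁ * A := mul_le_mul_of_nonneg_right hk hA.le
    calc min |(k₁ + 1) * A - x| |k₁ * A - x| ≤ |k₁ * A - x| := min_le_right _ _
      _ = x - k₁ * A := by rw [abs_of_nonpos (by linarith)]; ring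
      _ ≤ x - k * A := by linarith
      _ ≤ |k * A - x| := by rw [abs_sub_comm]; exact le_abs_self _
  · have : (k₁ + 1) * A ≤ k * A := mul_le_mul_of_nonneg_right hk hA.le
    calc min |(k₁ + 1) * A - x| |k₁ * A - x| ≤ |(k₁ + 1) * A - x| := min_le_left _ _
      _ = (k₁ + 1) * A - x := abs_of_nonneg (by linarith)
      _ ≤ k * A - x := by linarith
      _ ≤ |k * A - x| := le_abs_self _

theorem stmt_7_general (i D A k₀ : ℤ) (hA : 0 < A)
    (Δ₀ : ℤ) (hΔ₀ : Δ₀ = k₀ * A - i * D) (hneg : Δ₀ < 0)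
    (q k₁ Δ₁ : ℤ) (hq : q = |Δ₀| / A) (hk₁ : k₁ = k₀ + q) (hΔ₁ : Δ₁ = -(|Δ₀| % A)) :
    Δ₁ = k₁ * A - i * D ∧
    (if |Δ₁ + A| < |Δ₁| then
        ∀ k : ℤ, |(k₁ + 1) * A - i * D| ≤ |k * A - i * D|
      else
        ∀ k : ℤ, |k₁ * A - i * D| ≤ |k * A - i * D|) := by
  have hΔ₁_eq : Δ₁ = k₁ * A - i * D := by
    rw [hΔ₁, Int.emod_def, hk₁, hq, abs_of_neg hneg, hΔ₀]; ring
  have hlow : k₁ * A ≤ i * D := by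
    linarith [Int.emod_nonneg |Δ₀| hA.ne']
  have hhigh : i * D < (k₁ + 1) * A := by
    linarith [Int.emod_lt_of_pos |Δ₀| hA]
  have hnearest := min_abs_le_abs_mul_sub hlow hhigh
  have hΔ₁_add : Δ₁ + A = (k₁ + 1) * A - i * D := by rw [hΔ₁_eq]; ring
  refine ⟨hΔ₁_eq, ?_⟩
  rw [hΔ₁_add, hΔ₁_eq]
  split_ifs with h
  · simpa only [min_eq_left h.le] using hnearest
  · simpa only [min_eq_right (not_lt.mp h)] using hnearest

theorem stmt_7 (i D A k₀ : ℤ) (hi : 0 ≤ i) (hD : 0 ≤ D) (hA : 0 < A)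
    (Δ₀ : ℤ) (hΔ₀ : Δ₀ = k₀ * A - i * D) (hneg : Δ₀ < 0)
    (q k₁ Δ₁ : ℤ) (hq : q = |Δ₀| / A) (hk₁ : k₁ = k₀ + q) (hΔ₁ : Δ₁ = -(|Δ₀| % A)) :
    Δ₁ = k₁ * A - i * D ∧
    (if |Δ₁ + A| < |Δ₁| then
        ∀ k : ℤ, |(k₁ + 1) * A - i * D| ≤ |k * A - i * D|
      else
        ∀ k : ℤ, |k₁ * A - i * D| ≤ |k * A - i * D|) :=
  stmt_7_general i D A k₀ hA Δ₀ hΔ₀ hneg q k₁ Δ₁ hq hk₁ hΔ₁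
end

section
/- The residual Δ returned by the direct-search algorithm satisfies Δ = j·A − i·D and |Δ| ≤ A/2, where j is the returned integer. -/
/-- Direct-search algorithm with correction term `Δm`. -/
def ds (i D A k₀ Δm : ℤ) : ℤ × ℤ :=
  let Δ₀ := k₀ * A - i * D + Δm
  if Δ₀ = 0 then (k₀, 0)
  else if 0 < Δ₀ then
    let k₁ := k₀ - Δ₀ / A
    let Δ₁ := Δ₀ % A
    if |Δ₁ - A| < |Δ₁| then (k₁ - 1, Δ₁ - A) else (k₁, Δ₁)
  else
    let k₁ := k₀ + |Δ₀| / A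
    let Δ₁ := -(|Δ₀| % A)
    if |Δ₁ + A| < |Δ₁| then (k₁ + 1, Δ₁ + A) else (k₁, Δ₁)

/-- Each branch shifts `k` by some `q` and the residual by `q * A`. -/
theorem ds_snd_eq (i D A k₀ Δm : ℤ) :
    (ds i D A k₀ Δm).2 = (ds i D A k₀ Δm).1 * A - i * D + Δm := by
  unfold ds
  dsimp only
  split_ifs with hzero hpos
  · linarith
  all_goals rw [Int.emod_def]
  · ring
  · ring
  all_goals
    rw [abs_of_neg (lt_of_le_of_ne (not_lt.mp hpos) hzero)]
    ring

lemma abs_add_abs_sub_eq {r A : ℤ} (hr : 0 ≤ r) (hrA : r ≤ A) : |r| + |r - A| = A := by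
  rw [abs_of_nonneg hr, abs_of_nonpos (sub_nonpos.mpr hrA)]
  ring

/-- The nearer of the two representatives `r` and `r - A` of the remainder is within `A / 2`
of zero, because their distances to zero add up to `A`. -/
theorem two_mul_abs_ds_snd_le (i D A k₀ Δm : ℤ) (hA : 0 < A) :
    2 * |(ds i D A k₀ Δm).2| ≤ A := by
  unfold ds
  dsimp only
  generalize k₀ * A - i * D + Δm = Δ₀
  have hsum (x : ℤ) : |x % A| + |x % A - A| = A :=
    abs_add_abs_sub_eq (Int.emod_nonneg x hA.ne') (Int.emod_lt_of_pos x hA).le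
  split_ifs with _ _ hnear hnear
  · simpa using hA.le
  all_goals
    simp only [neg_add_eq_sub, abs_neg, abs_sub_comm A] at hnear ⊢
    linarith [hsum Δ₀, hsum |Δ₀|]

theorem stmt_9_general (i D A k₀ : ℤ) (hA : 0 < A) :
    (ds i D A k₀ 0).2 = (ds i D A k₀ 0).1 * A - i * D ∧
    |((ds i D A k₀ 0).2 : ℚ)| ≤ (A : ℚ) / 2 := by
  refine ⟨by simpa using ds_snd_eq i D A k₀ 0, ?_⟩
  have hbound : 2 * |((ds i D A k₀ 0).2 : ℚ)| ≤ A := by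
    exact_mod_cast two_mul_abs_ds_snd_le i D A k₀ 0 hA
  linarith

theorem stmt_9 (i D A k₀ : ℤ) (hi : 0 ≤ i) (hD : 0 ≤ D) (hA : 0 < A) :
    (ds i D A k₀ 0).2 = (ds i D A k₀ 0).1 * A - i * D ∧
    |((ds i D A k₀ 0).2 : ℚ)| ≤ (A : ℚ) / 2 :=
  stmt_9_general i D A k₀ hA
end

section
/- Additive decomposition into two subproblems: Let i₁, i₂, D be nonnegative integers and A a positive integer, and let i = i₁ + i₂. If j₁ minimizes |k·A − i₁·D| over integers k with residual Δ̃₁ = j₁·A − i₁·D, and j₂ is the output of the direct-search algorithm called with inputs (i₂, D, A, κ₂, Δ̃₁) (i.e., the residual of the first subproblem added as a correction term to Δ₀), then j = j₁ + j₂ minimizes |k·A − i·D| over all integers k, and the returned residual equals j·A − i·D. -/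
theorem Int.abs_le_abs_of_dvd_sub_of_two_mul_abs_le {A r x : ℤ} (hdvd : A ∣ x - r)
    (hr : 2 * |r| ≤ A) : |r| ≤ |x| := by
  rcases eq_or_ne (x - r) 0 with hxr | hxr
  · rw [sub_eq_zero.mp hxr]
  · have hA : A ≤ |x - r| := Int.le_abs_of_dvd hxr hdvd
    linarith [abs_sub x r]

theorem stmt_10_general (i₁ i₂ D A : ℤ) (hA : 0 < A)
    (j₁ Δ₁ : ℤ) (hΔ₁ : Δ₁ = j₁ * A - i₁ * D) (κ₂ : ℤ) :
    (∀ k : ℤ, |(j₁ + (ds i₂ D A κ₂ Δ₁).1) * A - (i₁ + i₂) * D| ≤ |k * A - (i₁ + i₂) * D|) ∧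
    (ds i₂ D A κ₂ Δ₁).2 = (j₁ + (ds i₂ D A κ₂ Δ₁).1) * A - (i₁ + i₂) * D := by
  set j₂ := (ds i₂ D A κ₂ Δ₁).1
  have hres : (ds i₂ D A κ₂ Δ₁).2 = (j₁ + j₂) * A - (i₁ + i₂) * D := by
    rw [ds_snd_eq]; linear_combination hΔ₁
  refine ⟨fun k => ?_, hres⟩
  rw [← hres]
  refine Int.abs_le_abs_of_dvd_sub_of_two_mul_abs_le ⟨k - (j₁ + j₂), ?_⟩
    (two_mul_abs_ds_snd_le i₂ D A κ₂ Δ₁ hA)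
  rw [hres]; ring

theorem stmt_10 (i₁ i₂ D A : ℤ) (hi₁ : 0 ≤ i₁) (hi₂ : 0 ≤ i₂) (hD : 0 ≤ D) (hA : 0 < A)
    (j₁ Δ₁ : ℤ) (hmin₁ : ∀ k : ℤ, |j₁ * A - i₁ * D| ≤ |k * A - i₁ * D|)
    (hΔ₁ : Δ₁ = j₁ * A - i₁ * D) (κ₂ : ℤ) :
    (∀ k : ℤ, |(j₁ + (ds i₂ D A κ₂ Δ₁).1) * A - (i₁ + i₂) * D| ≤ |k * A - (i₁ + i₂) * D|) ∧
    (ds i₂ D A κ₂ Δ₁).2 = (j₁ + (ds i₂ D A κ₂ Δ₁).1) * A - (i₁ + i₂) * D :=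
  stmt_10_general i₁ i₂ D A hA j₁ Δ₁ hΔ₁ κ₂
end
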